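/- arXiv:2501.09612 — 4 statements merged into one kernel-verified Lean document; each statement's English description precedes it below -/
import Mathlib

section
/- Let l₀ ≥ 1 be the minimal integer such that K^{⊗l₀} admits a never-vanishing pseudoholomorphic section, trivialized by F·Ω^{⊗l₀} with F never-vanishing smooth. If for some p with 0 < p < l₀ there exists a nonzero smooth function g with g·Ω^{⊗p} pseudoholomorphic, then g^{l₀}·Ω^{⊗p·l₀} and F^p·Ω^{⊗p·l₀} are both pseudoholomorphic sections of K^{⊗p·l₀}, hence g^{l₀} is a constant multiple of F^p, so g is never-vanishing — contradicting minimality of l₀. Therefore K^{⊗p} has no nonzero pseudoholomorphic sections for 0 < p < l₀. -/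
/-!
If `g·Ω^{⊗p}` and `F·Ω^{⊗l₀}` are pseudoholomorphic, the logarithmic `∂̄`-derivatives of `g`
and `F` are `-p·γ` and `-l₀·γ`, so `g^{l₀} / F^p` has logarithmic derivative
`l₀·(-p·γ) + p·(l₀·γ) = 0`. By the maximum principle `g^{l₀} = c·F^p` for a constant `c`,
which is nonzero as soon as `g ≠ 0`; then `g` vanishes nowhere, against the minimality of `l₀`.
-/

/-- The operator `D_l(f) = ∂̄f + l·f·γ`, so that `f·Ω^{⊗l}` is a
pseudoholomorphic section of `K^{⊗l}` iff `D_l(f) = 0`, where `∂̄Ω = γ∧Ω`. -/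
noncomputable def Dop {M : Type*} [TopologicalSpace M]
    {A : Type*} [AddCommGroup A] [Module ℂ A] [Module C(M, ℂ) A]
    [IsScalarTower ℂ C(M, ℂ) A]
    (dbar : C(M, ℂ) →ₗ[ℂ] A) (γ : A) (l : ℕ) : C(M, ℂ) →ₗ[ℂ] A where
  toFun f := dbar f + (l : ℂ) • (f • γ)
  map_add' f g := by simp [add_smul]; abel
  map_smul' c f := by
    simp [smul_assoc, smul_comm c ((l : ℂ))]

namespace Derivation

variable {R S M : Type*} [CommRing R] [CommRing S] [Algebra R S] [AddCommGroup M]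
  [Module S M] [Module R M] (D : Derivation R S M) {f g : S} {ω η : M}

theorem map_mul_of_eq_smul (hf : D f = f • ω) (hg : D g = g • η) :
    D (f * g) = (f * g) • (ω + η) := by
  rw [leibniz, hf, hg, smul_smul, smul_smul, mul_comm g f, ← smul_add, add_comm]

theorem map_pow_of_eq_smul (hf : D f = f • ω) (n : ℕ) : D (f ^ n) = f ^ n • (n • ω) := by
  induction n with
  | zero => simp
  | succ n ih => rw [pow_succ, D.map_mul_of_eq_smul ih hf, succ_nsmul]

theorem map_of_mul_eq_one_of_eq_smul (hfg : f * g = 1) (hf : D f = f • ω) :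
    D g = g • -ω := by
  rw [D.leibniz_of_mul_eq_one (mul_comm f g ▸ hfg), hf, smul_smul, sq, neg_mul, mul_assoc,
    mul_comm g f, hfg, mul_one, neg_smul, smul_neg]

end Derivation

theorem Dop_eq_zero_iff {M : Type*} [TopologicalSpace M] {A : Type*} [AddCommGroup A]
    [Module ℂ A] [Module C(M, ℂ) A] [IsScalarTower ℂ C(M, ℂ) A]
    (dbar : C(M, ℂ) →ₗ[ℂ] A) (γ : A) (l : ℕ) (f : C(M, ℂ)) :
    Dop dbar γ l f = 0 ↔ dbar f = f • (-(l : ℂ) • γ) := by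
  rw [smul_comm, neg_smul, eq_neg_iff_add_eq_zero]
  rfl

theorem apply_ne_zero_of_pow_eq_const_mul_pow {X K : Type*} [MonoidWithZero K] [NoZeroDivisors K]
    {g F : X → K} {n p : ℕ} {c : K} (hn : n ≠ 0) (hgF : ∀ x, g x ^ n = c * F x ^ p)
    (hF : ∀ x, F x ≠ 0) {x₀ : X} (hx₀ : g x₀ ≠ 0) (x : X) : g x ≠ 0 := by
  have hc : c ≠ 0 := by
    rintro rfl
    exact pow_ne_zero n hx₀ (by simpa using hgF x₀)
  intro hx
  exact mul_ne_zero hc (pow_ne_zero p (hF x)) (by rw [← hgF, hx, zero_pow hn])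

theorem stmt_3_general {M : Type*} [TopologicalSpace M]
    {A : Type*} [AddCommGroup A] [Module ℂ A] [Module C(M, ℂ) A]
    [IsScalarTower ℂ C(M, ℂ) A]
    (dbar : C(M, ℂ) →ₗ[ℂ] A)
    (hleib : ∀ f g : C(M, ℂ), dbar (f * g) = f • dbar g + g • dbar f)
    (hmax : ∀ f : C(M, ℂ), dbar f = 0 → ∃ c : ℂ, f = ContinuousMap.const M c)
    (γ : A) (l₀ : ℕ)
    (F : C(M, ℂ)) (hFnv : ∀ x, F x ≠ 0) (hF : Dop dbar γ l₀ F = 0)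
    (hmin : ∀ l : ℕ, 1 ≤ l → l < l₀ →
      ¬ ∃ h : C(M, ℂ), (∀ x, h x ≠ 0) ∧ Dop dbar γ l h = 0) :
    ∀ p : ℕ, 0 < p → p < l₀ → ∀ g : C(M, ℂ), Dop dbar γ p g = 0 → g = 0 := by
  intro p hp hpl g hg
  by_contra hg0
  let D := Derivation.mk' dbar hleib
  have hDg : D g = g • (-(p : ℂ) • γ) := (Dop_eq_zero_iff dbar γ p g).1 hg
  have hDF : D F = F • (-(l₀ : ℂ) • γ) := (Dop_eq_zero_iff dbar γ l₀ F).1 hF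
  obtain ⟨Finv, hFFinv⟩ := (F.isUnit_iff_forall_ne_zero.2 hFnv).exists_right_inv
  have hDFinv := D.map_of_mul_eq_one_of_eq_smul hFFinv hDF
  have hDquot : D (g ^ l₀ * Finv ^ p) = 0 := by
    rw [D.map_mul_of_eq_smul (D.map_pow_of_eq_smul hDg l₀) (D.map_pow_of_eq_smul hDFinv p)]
    convert smul_zero (g ^ l₀ * Finv ^ p) using 2
    module
  obtain ⟨c, hc⟩ := hmax _ hDquot
  have hgF : g ^ l₀ = ContinuousMap.const M c * F ^ p := by
    rw [← hc, mul_assoc, ← mul_pow, mul_comm Finv, hFFinv, one_pow, mul_one]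
  obtain ⟨x₀, hx₀⟩ : ∃ x, g x ≠ 0 := by simpa [ContinuousMap.ext_iff] using hg0
  have hgF_apply (x : M) : g x ^ l₀ = c * F x ^ p := by simpa using congr($hgF x)
  exact hmin p hp hpl ⟨g, apply_ne_zero_of_pow_eq_const_mul_pow (by omega) hgF_apply hFnv hx₀, hg⟩

/-- let `l₀ ≥ 1` be minimal such that `K^{⊗l₀}` admits a
never-vanishing pseudoholomorphic section `F·Ω^{⊗l₀}` (`F` never-vanishing,
`D_{l₀}F = 0`).  Then for `0 < p < l₀` the bundle `K^{⊗p}` has no nonzero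
pseudoholomorphic section: `D_p(g) = 0` implies `g = 0`.
Here `∂̄` is an abstract `∂̄`-operator satisfying the Leibniz rule and the
maximum principle (`∂̄`-closed functions on the compact connected `M` are
constant). -/
theorem stmt_3 {M : Type*} [TopologicalSpace M] [CompactSpace M]
    [ConnectedSpace M]
    {A : Type*} [AddCommGroup A] [Module ℂ A] [Module C(M, ℂ) A]
    [IsScalarTower ℂ C(M, ℂ) A]
    (dbar : C(M, ℂ) →ₗ[ℂ] A)
    (hleib : ∀ f g : C(M, ℂ), dbar (f * g) = f • dbar g + g • dbar f)
    (hmax : ∀ f : C(M, ℂ), dbar f = 0 → ∃ c : ℂ, f = ContinuousMap.const M c)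
    (γ : A) (l₀ : ℕ) (hl₀ : 1 ≤ l₀)
    (F : C(M, ℂ)) (hFnv : ∀ x, F x ≠ 0) (hF : Dop dbar γ l₀ F = 0)
    (hmin : ∀ l : ℕ, 1 ≤ l → l < l₀ →
      ¬ ∃ h : C(M, ℂ), (∀ x, h x ≠ 0) ∧ Dop dbar γ l h = 0) :
    ∀ p : ℕ, 0 < p → p < l₀ → ∀ g : C(M, ℂ), Dop dbar γ p g = 0 → g = 0 :=
  stmt_3_general dbar hleib hmax γ l₀ F hFnv hF hmin
end

section
/- Let (M,J) be a compact connected almost complex manifold with trivializable canonical bundle K, and suppose some tensor power K^{⊗l₀} (l₀ ≥ 1 minimal) admits a never-vanishing pseudoholomorphic section. Then dim_ℂ P_l = 1 if l₀ | l and dim_ℂ P_l = 0 otherwise, where P_l is the space of pseudoholomorphic sections of K^{⊗l}; consequently the Kodaira dimension κ_J = 0. -/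
/-!
Multiplying by a nowhere vanishing `F ∈ P_{l₀}` shifts the degree by `l₀`: by the Leibniz
rule, `D_{r+l₀}(h·F) = F·D_r(h)`. Hence `P_{q l₀ + r} = F^q · P_r`. For `r = 0` the maximum
principle gives `P_0 = ℂ`, so `P_{q l₀} = ℂ·F^q`. For `0 < r < l₀` a nonzero `g ∈ P_r` would
satisfy `g^{l₀} ∈ P_{r l₀} = ℂ·F^r`, so `g` would vanish nowhere, against the minimality of
`l₀`. Thus every `dim P_l` is `0` or `1`, and `κ_J = 0`.
-/

open Filter

section Dop

variable {M : Type*} [TopologicalSpace M]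
    {A : Type*} [AddCommGroup A] [Module ℂ A] [Module C(M, ℂ) A]
    [IsScalarTower ℂ C(M, ℂ) A] (dbar : C(M, ℂ) →ₗ[ℂ] A) (γ : A)

theorem Dop_apply (l : ℕ) (f : C(M, ℂ)) :
    Dop dbar γ l f = dbar f + (l : ℂ) • (f • γ) :=
  rfl

variable {dbar} (hleib : ∀ f g : C(M, ℂ), dbar (f * g) = f • dbar g + g • dbar f)
include hleib

theorem Dop_mul (a b : ℕ) (f g : C(M, ℂ)) :
    Dop dbar γ (a + b) (f * g) = f • Dop dbar γ b g + g • Dop dbar γ a f := by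
  simp only [Dop_apply, hleib, smul_add, smul_comm f (_ : ℂ), smul_comm g (_ : ℂ), smul_smul,
    mul_comm g f, Nat.cast_add, add_smul]
  abel

theorem Dop_pow_eq_zero {r : ℕ} {g : C(M, ℂ)} (hg : Dop dbar γ r g = 0) (k : ℕ) :
    Dop dbar γ (k * r) (g ^ k) = 0 := by
  induction k with
  | zero =>
    rw [zero_mul, pow_zero, Dop_apply, Nat.cast_zero, zero_smul, add_zero]
    exact (Derivation.mk' dbar hleib).map_one_eq_zero
  | succ k ih =>
    rw [Nat.succ_mul, pow_succ, Dop_mul γ hleib, ih, hg, smul_zero, smul_zero, add_zero]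

theorem Dop_mul_eq_zero_iff_of_isUnit {a b : ℕ} {u h : C(M, ℂ)} (hu : IsUnit u)
    (hDu : Dop dbar γ a u = 0) :
    Dop dbar γ (b + a) (h * u) = 0 ↔ Dop dbar γ b h = 0 := by
  rw [Dop_mul γ hleib, hDu, smul_zero, zero_add, hu.smul_eq_zero]

end Dop

section Kernel

variable {M : Type*} [TopologicalSpace M]
    {A : Type*} [AddCommGroup A] [Module ℂ A] [Module C(M, ℂ) A]
    [IsScalarTower ℂ C(M, ℂ) A] {dbar : C(M, ℂ) →ₗ[ℂ] A}
    (hleib : ∀ f g : C(M, ℂ), dbar (f * g) = f • dbar g + g • dbar f)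
    (hmax : ∀ f : C(M, ℂ), dbar f = 0 → ∃ c : ℂ, f = ContinuousMap.const M c)
    {γ : A} {l₀ : ℕ} {F : C(M, ℂ)} (hF : IsUnit F) (hDF : Dop dbar γ l₀ F = 0)

include hleib hmax hF hDF in
theorem ker_Dop_mul_eq_span (q : ℕ) :
    LinearMap.ker (Dop dbar γ (q * l₀)) = Submodule.span ℂ {F ^ q} := by
  ext g
  rw [LinearMap.mem_ker, Submodule.mem_span_singleton]
  constructor
  · intro hg
    set u := (hF.pow q).unit
    rw [← Units.inv_mul_cancel_right g u, ← zero_add (q * l₀),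
      Dop_mul_eq_zero_iff_of_isUnit γ hleib u.isUnit (Dop_pow_eq_zero γ hleib hDF q)] at hg
    obtain ⟨c, hc⟩ := hmax _ (by simpa [Dop_apply] using hg)
    refine ⟨c, ?_⟩
    rw [← Units.inv_mul_cancel_right g u, hc]
    ext x
    simp [u]
  · rintro ⟨c, rfl⟩
    rw [map_smul, Dop_pow_eq_zero γ hleib hDF, smul_zero]

include hleib hmax hF hDF in
theorem isUnit_of_Dop_eq_zero (hl₀ : l₀ ≠ 0) {r : ℕ} {g : C(M, ℂ)} (hg : g ≠ 0)
    (hDg : Dop dbar γ r g = 0) : IsUnit g := by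
  have hmem : g ^ l₀ ∈ LinearMap.ker (Dop dbar γ (r * l₀)) := by
    rw [LinearMap.mem_ker, mul_comm]
    exact Dop_pow_eq_zero γ hleib hDg l₀
  rw [ker_Dop_mul_eq_span hleib hmax hF hDF, Submodule.mem_span_singleton] at hmem
  obtain ⟨c, hc⟩ := hmem
  have hpt (x : M) : c * F x ^ r = g x ^ l₀ := by simpa using congr($hc x)
  have hFx := (ContinuousMap.isUnit_iff_forall_ne_zero F).1 hF
  obtain ⟨x₀, hx₀⟩ : ∃ x, g x ≠ 0 := by
    contrapose! hg
    ext x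
    exact hg x
  have hc : c ≠ 0 := by
    rintro rfl
    exact pow_ne_zero l₀ hx₀ (by simpa using (hpt x₀).symm)
  refine (ContinuousMap.isUnit_iff_forall_ne_zero g).2 fun x hx => ?_
  have := hpt x
  rw [hx, zero_pow hl₀] at this
  exact mul_ne_zero hc (pow_ne_zero r (hFx x)) this

include hleib hmax hF hDF in
theorem ker_Dop_eq_bot_of_not_dvd
    (hmin : ∀ l : ℕ, 1 ≤ l → l < l₀ →
      ¬ ∃ h : C(M, ℂ), (∀ x, h x ≠ 0) ∧ Dop dbar γ l h = 0)
    (hl₀ : 0 < l₀) {l : ℕ} (hl : ¬ l₀ ∣ l) : LinearMap.ker (Dop dbar γ l) = ⊥ := by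
  refine (Submodule.eq_bot_iff _).2 fun g hg => ?_
  set u := (hF.pow (l / l₀)).unit
  have hr : l % l₀ ≠ 0 := fun h => hl (Nat.dvd_of_mod_eq_zero h)
  rw [LinearMap.mem_ker, ← Nat.mod_add_div' l l₀, ← Units.inv_mul_cancel_right g u,
    Dop_mul_eq_zero_iff_of_isUnit γ hleib u.isUnit (Dop_pow_eq_zero γ hleib hDF _)] at hg
  by_contra hg0
  have hh : g * ↑u⁻¹ ≠ 0 := (Units.mul_left_eq_zero u⁻¹).not.2 hg0
  exact hmin (l % l₀) (Nat.one_le_iff_ne_zero.2 hr) (Nat.mod_lt l hl₀)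
    ⟨_, (ContinuousMap.isUnit_iff_forall_ne_zero _).1
      (isUnit_of_Dop_eq_zero hleib hmax hF hDF hl₀.ne' hh hg), hg⟩

include hleib hmax hF hDF in
theorem finrank_ker_Dop [Nonempty M]
    (hmin : ∀ l : ℕ, 1 ≤ l → l < l₀ →
      ¬ ∃ h : C(M, ℂ), (∀ x, h x ≠ 0) ∧ Dop dbar γ l h = 0)
    (hl₀ : 0 < l₀) (l : ℕ) :
    Module.finrank ℂ (LinearMap.ker (Dop dbar γ l)) = if l₀ ∣ l then 1 else 0 := by
  split_ifs with hl
  · obtain ⟨q, rfl⟩ := hl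
    rw [mul_comm, ker_Dop_mul_eq_span hleib hmax hF hDF]
    exact finrank_span_singleton (hF.pow q).ne_zero
  · rw [ker_Dop_eq_bot_of_not_dvd hleib hmax hF hDF hmin hl₀ hl, finrank_bot]

end Kernel

theorem stmt_5_general {M : Type*} [TopologicalSpace M]
    [ConnectedSpace M]
    {A : Type*} [AddCommGroup A] [Module ℂ A] [Module C(M, ℂ) A]
    [IsScalarTower ℂ C(M, ℂ) A]
    (dbar : C(M, ℂ) →ₗ[ℂ] A)
    (hleib : ∀ f g : C(M, ℂ), dbar (f * g) = f • dbar g + g • dbar f)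
    (hmax : ∀ f : C(M, ℂ), dbar f = 0 → ∃ c : ℂ, f = ContinuousMap.const M c)
    (γ : A) (l₀ : ℕ) (hl₀ : 1 ≤ l₀)
    (F : C(M, ℂ)) (hFnv : ∀ x, F x ≠ 0) (hF : Dop dbar γ l₀ F = 0)
    (hmin : ∀ l : ℕ, 1 ≤ l → l < l₀ →
      ¬ ∃ h : C(M, ℂ), (∀ x, h x ≠ 0) ∧ Dop dbar γ l h = 0) :
    (∀ l : ℕ, 1 ≤ l →
      Module.finrank ℂ (LinearMap.ker (Dop dbar γ l)) =
        if l₀ ∣ l then 1 else 0) ∧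
    Filter.limsup
      (fun l : ℕ =>
        Real.log (Module.finrank ℂ (LinearMap.ker (Dop dbar γ l))) /
          Real.log l) Filter.atTop = 0 := by
  have hdim := finrank_ker_Dop hleib hmax
    ((ContinuousMap.isUnit_iff_forall_ne_zero F).2 hFnv) hF hmin hl₀
  refine ⟨fun l _ => hdim l, ?_⟩
  have hzero (l : ℕ) :
      Real.log (Module.finrank ℂ (LinearMap.ker (Dop dbar γ l))) / Real.log l = 0 := by
    rw [hdim]
    split_ifs <;> simp
  simp only [hzero, limsup_const]

/-- if `(M,J)` is compact connected with trivializable canonical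
bundle and `l₀ ≥ 1` is minimal such that `K^{⊗l₀}` admits a never-vanishing
pseudoholomorphic section, then `dim_ℂ P_l = 1` if `l₀ ∣ l` and `= 0`
otherwise, where `P_l = ker D_l` is the space of pseudoholomorphic sections of
`K^{⊗l}`; consequently the Kodaira dimension
`κ_J = limsup (log dim P_l)/(log l) = 0`. -/
theorem stmt_5 {M : Type*} [TopologicalSpace M] [CompactSpace M]
    [ConnectedSpace M]
    {A : Type*} [AddCommGroup A] [Module ℂ A] [Module C(M, ℂ) A]
    [IsScalarTower ℂ C(M, ℂ) A]
    (dbar : C(M, ℂ) →ₗ[ℂ] A)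
    (hleib : ∀ f g : C(M, ℂ), dbar (f * g) = f • dbar g + g • dbar f)
    (hmax : ∀ f : C(M, ℂ), dbar f = 0 → ∃ c : ℂ, f = ContinuousMap.const M c)
    (γ : A) (l₀ : ℕ) (hl₀ : 1 ≤ l₀)
    (F : C(M, ℂ)) (hFnv : ∀ x, F x ≠ 0) (hF : Dop dbar γ l₀ F = 0)
    (hmin : ∀ l : ℕ, 1 ≤ l → l < l₀ →
      ¬ ∃ h : C(M, ℂ), (∀ x, h x ≠ 0) ∧ Dop dbar γ l h = 0) :
    (∀ l : ℕ, 1 ≤ l →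
      Module.finrank ℂ (LinearMap.ker (Dop dbar γ l)) =
        if l₀ ∣ l then 1 else 0) ∧
    Filter.limsup
      (fun l : ℕ =>
        Real.log (Module.finrank ℂ (LinearMap.ker (Dop dbar γ l))) /
          Real.log l) Filter.atTop = 0 :=
  stmt_5_general dbar hleib hmax γ l₀ hl₀ F hFnv hF hmin
end

section
/- Let M = Γ\G be a compact quotient of a Lie group with an invariant almost complex structure J and invariant trivialization Ω of K_J. If for some l the bundle K_J^{⊗l} admits a pseudoholomorphic trivialization F·Ω^{⊗l} (F never-vanishing), then every pseudoholomorphic section of K_J^{⊗l} is a constant multiple of F·Ω^{⊗l}; in particular, all pseudoholomorphic trivializations of K_J^{⊗l} are invariant if and only if F can be chosen constant. -/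

private lemma key_lemma {M : Type*} [TopologicalSpace M]
    {A : Type*} [AddCommGroup A] [Module ℂ A] [Module C(M, ℂ) A]
    [IsScalarTower ℂ C(M, ℂ) A]
    (dbar : C(M, ℂ) →ₗ[ℂ] A)
    (hleib : ∀ f g : C(M, ℂ), dbar (f * g) = f • dbar g + g • dbar f)
    (hmax : ∀ f : C(M, ℂ), dbar f = 0 →
      ∃ c : ℂ, f = ContinuousMap.const M c)
    (γ : A) (l : ℕ)
    (F : C(M, ℂ)) (hFnv : ∀ x, F x ≠ 0) (hF : Dop dbar γ l F = 0)
    (g : C(M, ℂ)) (hg : Dop dbar γ l g = 0) : ∃ c : ℂ, g = c • F := by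
  have hFcont : Continuous fun x => (F x)⁻¹ := (map_continuous F).inv₀ hFnv
  set Finv : C(M, ℂ) := ⟨fun x => (F x)⁻¹, hFcont⟩ with hFinv
  have hFF : Finv * F = 1 := by
    ext x
    exact inv_mul_cancel₀ (hFnv x)
  set f : C(M, ℂ) := Finv * g with hf
  have hgFf : g = F * f := by
    ext x
    simp only [hf, ContinuousMap.mul_apply, hFinv, ContinuousMap.coe_mk]
    rw [← mul_assoc, mul_inv_cancel₀ (hFnv x), one_mul]
  -- unfold the two Dop equations
  have hF' : dbar F + (l : ℂ) • (F • γ) = 0 := hF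
  have hg' : dbar g + (l : ℂ) • (g • γ) = 0 := hg
  have hdF : dbar F = -((l : ℂ) • (F • γ)) := by
    rw [eq_neg_iff_add_eq_zero]; exact hF'
  have hcalc : F • dbar f = 0 := by
    have h1 : dbar g = F • dbar f + f • dbar F := by
      rw [hgFf]; exact hleib F f
    have h2 : g • γ = f • (F • γ) := by
      rw [hgFf, mul_comm, mul_smul]
    have := hg'
    rw [h1, h2, hdF] at this
    have h3 : f • -((l : ℂ) • F • γ) + (l : ℂ) • f • F • γ = 0 := by
      rw [smul_neg, smul_comm f ((l:ℂ))]
      abel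
    calc F • dbar f
        = F • dbar f + (f • -((l : ℂ) • F • γ) + (l : ℂ) • f • F • γ) := by
          rw [h3, add_zero]
      _ = F • dbar f + f • -((l : ℂ) • F • γ) + (l : ℂ) • f • F • γ := by abel
      _ = 0 := this
  have hdf : dbar f = 0 := by
    have := congrArg (fun a => Finv • a) hcalc
    simpa [← mul_smul, hFF] using this
  obtain ⟨c, hc⟩ := hmax f hdf
  refine ⟨c, ?_⟩
  rw [hgFf, hc]
  ext x
  simp [mul_comm]

/-- let `M = Γ\G` be a compact quotient of a Lie group with an
invariant almost complex structure `J` and invariant trivialization `Ω` of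
`K_J` (with `∂̄Ω = γ∧Ω`).  A section `h·Ω^{⊗l}` is invariant iff `h` is
constant.  If `K_J^{⊗l}` admits a pseudoholomorphic trivialization `F·Ω^{⊗l}`
with `F` never-vanishing, then every pseudoholomorphic section of `K_J^{⊗l}`
is a constant multiple of `F·Ω^{⊗l}`; in particular all pseudoholomorphic
trivializations of `K_J^{⊗l}` are invariant iff `F` can be chosen constant. -/
theorem stmt_6 {G : Type*} [Group G] [TopologicalSpace G] [IsTopologicalGroup G]
    (Γ : Subgroup G) [CompactSpace (G ⧸ Γ)] [ConnectedSpace (G ⧸ Γ)]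
    {A : Type*} [AddCommGroup A] [Module ℂ A] [Module C(G ⧸ Γ, ℂ) A]
    [IsScalarTower ℂ C(G ⧸ Γ, ℂ) A]
    (dbar : C(G ⧸ Γ, ℂ) →ₗ[ℂ] A)
    (hleib : ∀ f g : C(G ⧸ Γ, ℂ), dbar (f * g) = f • dbar g + g • dbar f)
    (hmax : ∀ f : C(G ⧸ Γ, ℂ), dbar f = 0 →
      ∃ c : ℂ, f = ContinuousMap.const (G ⧸ Γ) c)
    (γ : A) (l : ℕ) (hl : 1 ≤ l)
    (F : C(G ⧸ Γ, ℂ)) (hFnv : ∀ x, F x ≠ 0) (hF : Dop dbar γ l F = 0) :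
    (∀ g : C(G ⧸ Γ, ℂ), Dop dbar γ l g = 0 → ∃ c : ℂ, g = c • F) ∧
    ((∀ h : C(G ⧸ Γ, ℂ), (∀ x, h x ≠ 0) → Dop dbar γ l h = 0 →
        ∃ c : ℂ, h = ContinuousMap.const (G ⧸ Γ) c) ↔
      ∃ F' : C(G ⧸ Γ, ℂ), (∃ c : ℂ, F' = ContinuousMap.const (G ⧸ Γ) c) ∧
        (∀ x, F' x ≠ 0) ∧ Dop dbar γ l F' = 0) := by
  constructor
  · exact fun g hg => key_lemma dbar hleib hmax γ l F hFnv hF g hg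
  · constructor
    · intro H
      exact ⟨F, H F hFnv hF, hFnv, hF⟩
    · rintro ⟨F', ⟨c', hc'⟩, hF'nv, hF'⟩ h hhnv hh
      obtain ⟨c, hc⟩ := key_lemma dbar hleib hmax γ l F' hF'nv hF' h hh
      refine ⟨c * c', ?_⟩
      rw [hc, hc']
      ext x
      simp [mul_comm]
end

section
/- The space of smooth doubly periodic solutions (u,v) of the system u_t − v_x − u = 0, u_x + v_t − v = 0 on the 2-torus is exactly {(u,v) = (A e^{ix} + Ā e^{−ix}, iA e^{ix} − iĀ e^{−ix}) : A ∈ ℂ}; equivalently, f = u + iv satisfies the system iff f(t,x) = 2B e^{−ix} for some B ∈ ℂ. -/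
open Real Complex

/-- Partial derivative in the first variable `t`. -/
noncomputable def pt (u : ℝ → ℝ → ℝ) : ℝ → ℝ → ℝ :=
  fun t x => deriv (fun s => u s x) t

/-- Partial derivative in the second variable `x`. -/
noncomputable def px (u : ℝ → ℝ → ℝ) : ℝ → ℝ → ℝ :=
  fun t x => deriv (fun y => u t y) x

open Bornology Set in
lemma liouville_key (f : ℝ → ℝ → ℂ)
    (hf : ContDiff ℝ (⊤ : ℕ∞) (fun p : ℝ × ℝ => f p.1 p.2))
    (hp1 : ∀ t x, f (t + 2 * π) x = f t x)
    (hp2 : ∀ t x, f t (x + 2 * π) = f t x)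
    (hpde : ∀ t x, deriv (fun s => f s x) t + Complex.I * deriv (fun y => f t y) x = f t x) :
    ∀ t x : ℝ, f t x = f 0 0 * Complex.exp (-Complex.I * x) := by
  have hfd : Differentiable ℝ (fun p : ℝ × ℝ => f p.1 p.2) := hf.differentiable (by simp)
  -- sections are differentiable
  have hsec1 : ∀ t x : ℝ, DifferentiableAt ℝ (fun s => f s x) t := by
    intro t x
    exact (hfd.comp (differentiable_id.prodMk (differentiable_const x))).differentiableAt
  have hsec2 : ∀ t x : ℝ, DifferentiableAt ℝ (fun y => f t y) x := by
    intro t x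
    exact (hfd.comp ((differentiable_const t).prodMk differentiable_id)).differentiableAt
  set G : ℝ × ℝ → ℂ := fun p => f p.1 p.2 * Complex.exp (Complex.I * p.2) with hGdef
  have hGd : Differentiable ℝ G := by
    have he : Differentiable ℝ (fun p : ℝ × ℝ => Complex.exp (Complex.I * p.2)) := by
      have h1 : Differentiable ℝ (fun p : ℝ × ℝ => Complex.I * (p.2 : ℂ)) :=
        (differentiable_const Complex.I).mul (Complex.ofRealCLM.differentiable.comp differentiable_snd)
      have h2 : Differentiable ℝ (Complex.exp) := Complex.differentiable_exp
      exact h2.comp h1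
    exact hfd.mul he
  set F : ℂ → ℂ := fun z => G (z.re, z.im) with hFdef
  -- F is complex differentiable
  have hFdiff : Differentiable ℂ F := by
    intro z
    set t := z.re with ht
    set x := z.im with hx
    have hD : HasFDerivAt G (fderiv ℝ G (t, x)) (t, x) := (hGd (t, x)).hasFDerivAt
    set D := fderiv ℝ G (t, x) with hDdef
    -- derivative in the t direction
    have hGt : HasDerivAt (fun s => f s x * Complex.exp (Complex.I * x))
        (deriv (fun s => f s x) t * Complex.exp (Complex.I * x)) t :=
      ((hsec1 t x).hasDerivAt).mul_const _
    have hGx : HasDerivAt (fun y => f t y * Complex.exp (Complex.I * y))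
        ((deriv (fun y => f t y) x + Complex.I * f t x) * Complex.exp (Complex.I * x)) x := by
      have h1 : HasDerivAt (fun y : ℝ => (y : ℂ)) 1 x := by
        simpa using (hasDerivAt_id x).ofReal_comp
      have h2 : HasDerivAt (fun y : ℝ => Complex.exp (Complex.I * y))
          (Complex.exp (Complex.I * x) * (Complex.I * 1)) x := (h1.const_mul Complex.I).cexp
      have h3 := ((hsec2 t x).hasDerivAt).mul h2
      exact h3.congr_deriv (by ring)
    have hc1 : HasDerivAt (fun s => G (s, x)) (D (1, 0)) t := by
      have hcurve : HasDerivAt (fun s : ℝ => ((s, x) : ℝ × ℝ)) ((1 : ℝ), (0 : ℝ)) t :=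
        (hasDerivAt_id t).prodMk (hasDerivAt_const t x)
      exact hD.comp_hasDerivAt t hcurve
    have hc2 : HasDerivAt (fun y => G (t, y)) (D (0, 1)) x := by
      have hcurve : HasDerivAt (fun y : ℝ => ((t, y) : ℝ × ℝ)) ((0 : ℝ), (1 : ℝ)) x :=
        (hasDerivAt_const x t).prodMk (hasDerivAt_id x)
      exact hD.comp_hasDerivAt x hcurve
    have hc1' : HasDerivAt (fun s => f s x * Complex.exp (Complex.I * x)) (D (1, 0)) t := hc1
    have hc2' : HasDerivAt (fun y => f t y * Complex.exp (Complex.I * y)) (D (0, 1)) x := hc2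
    have e1 : D (1, 0) = deriv (fun s => f s x) t * Complex.exp (Complex.I * x) :=
      hc1'.unique hGt
    have e2 : D (0, 1) = (deriv (fun y => f t y) x + Complex.I * f t x) *
        Complex.exp (Complex.I * x) := hc2'.unique hGx
    set c := deriv (fun s => f s x) t * Complex.exp (Complex.I * x) with hcdef
    have eCR : D (0, 1) = Complex.I * c := by
      rw [e2, hcdef]
      have := hpde t x
      have hd : deriv (fun y => f t y) x + Complex.I * f t x =
          Complex.I * deriv (fun s => f s x) t := by
        have hI : Complex.I * (deriv (fun s => f s x) t + Complex.I * deriv (fun y => f t y) x)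
            = Complex.I * f t x := by rw [this]
        linear_combination (deriv (fun y => f t y) x) * Complex.I_sq - hI
      rw [hd]; ring
    -- F has a real fderiv equal to restriction of a complex-linear map
    have hFr : HasFDerivAt F (D.comp (Complex.equivRealProdCLM.toContinuousLinearMap)) z := by
      have h0 : HasFDerivAt (⇑Complex.equivRealProdCLM)
          (Complex.equivRealProdCLM.toContinuousLinearMap) z :=
        Complex.equivRealProdCLM.toContinuousLinearMap.hasFDerivAt
      have := hD.comp z h0
      exact this
    have hEq : ((ContinuousLinearMap.smulRight (1 : ℂ →L[ℂ] ℂ) c).restrictScalars ℝ)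
        = D.comp (Complex.equivRealProdCLM.toContinuousLinearMap) := by
      apply ContinuousLinearMap.ext
      intro w
      have hw : (w.re, w.im) = w.re • ((1 : ℝ), (0 : ℝ)) + w.im • ((0 : ℝ), (1 : ℝ)) := by
        simp [Prod.ext_iff]
      have : D (w.re, w.im) = w.re • D (1, 0) + w.im • D (0, 1) := by
        rw [hw, map_add, map_smul, map_smul]
      simp only [ContinuousLinearMap.coe_restrictScalars', ContinuousLinearMap.coe_comp',
        Function.comp_apply, ContinuousLinearMap.smulRight_apply, ContinuousLinearMap.one_apply,
        ContinuousLinearEquiv.coe_coe, Complex.equivRealProdCLM_apply]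
      rw [this, e1, eCR]
      rw [Complex.real_smul, Complex.real_smul]
      rw [smul_eq_mul]
      linear_combination (-c) * (Complex.re_add_im w)
    have : HasFDerivAt F (ContinuousLinearMap.smulRight (1 : ℂ →L[ℂ] ℂ) c) z :=
      hasFDerivAt_of_restrictScalars ℝ hFr hEq
    exact this.differentiableAt
  -- F is doubly periodic
  have hper1 : ∀ z : ℂ, F (z + ((2 * π : ℝ) : ℂ)) = F z := by
    intro z
    have hpair : (((z + ((2 * π : ℝ) : ℂ)).re : ℝ), ((z + ((2 * π : ℝ) : ℂ)).im : ℝ))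
        = (z.re + 2 * π, z.im) := by simp
    show G _ = G _
    rw [hpair]
    show f (z.re + 2 * π) z.im * _ = _
    rw [hp1]
  have hper2 : ∀ z : ℂ, F (z + ((2 * π : ℝ) : ℂ) * Complex.I) = F z := by
    intro z
    have hpair : (((z + ((2 * π : ℝ) : ℂ) * Complex.I).re : ℝ),
        ((z + ((2 * π : ℝ) : ℂ) * Complex.I).im : ℝ)) = (z.re, z.im + 2 * π) := by simp
    show G _ = G _
    rw [hpair]
    show f z.re (z.im + 2 * π) * Complex.exp (Complex.I * ((z.im + 2 * π : ℝ) : ℂ)) = _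
    rw [hp2, Complex.ofReal_add, mul_add, Complex.exp_add,
      show Complex.I * ((2 * π : ℝ) : ℂ) = 2 * π * Complex.I by push_cast; ring,
      Complex.exp_two_pi_mul_I, mul_one]
  -- F is bounded
  have hFcont : Continuous F := by
    apply (hGd.continuous).comp
    exact Complex.continuous_re.prodMk Complex.continuous_im
  have hbdd : IsBounded (range F) := by
    set K : Set ℂ := (fun p : ℝ × ℝ => (p.1 : ℂ) + (p.2 : ℂ) * Complex.I) ''
      (Icc 0 (2 * π) ×ˢ Icc 0 (2 * π)) with hK
    have hKc : IsCompact K := by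
      apply (isCompact_Icc.prod isCompact_Icc).image
      continuity
    obtain ⟨C, hC⟩ := hKc.exists_bound_of_continuousOn hFcont.continuousOn
    rw [isBounded_iff_forall_norm_le]
    refine ⟨C, ?_⟩
    rintro y ⟨z, rfl⟩
    have hpi : (0 : ℝ) < 2 * π := by positivity
    set m : ℤ := ⌊z.re / (2 * π)⌋ with hm
    set n : ℤ := ⌊z.im / (2 * π)⌋ with hn
    set w : ℂ := ((z.re - m * (2 * π) : ℝ) : ℂ) + ((z.im - n * (2 * π) : ℝ) : ℂ) * Complex.I
      with hw
    have hwK : w ∈ K := by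
      refine ⟨(z.re - m * (2 * π), z.im - n * (2 * π)), ⟨⟨?_, ?_⟩, ⟨?_, ?_⟩⟩, rfl⟩
      · exact Int.sub_floor_div_mul_nonneg z.re hpi
      · exact le_of_lt (Int.sub_floor_div_mul_lt z.re hpi)
      · exact Int.sub_floor_div_mul_nonneg z.im hpi
      · exact le_of_lt (Int.sub_floor_div_mul_lt z.im hpi)
    have hP1 : Function.Periodic F ((2 * π : ℝ) : ℂ) := hper1
    have hP2 : Function.Periodic F (((2 * π : ℝ) : ℂ) * Complex.I) := hper2
    have hz : z = w + (m : ℂ) * ((2 * π : ℝ) : ℂ) + (n : ℂ) * (((2 * π : ℝ) : ℂ) * Complex.I) := by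
      apply Complex.ext <;> push_cast <;> simp [hw]
    have : F z = F w := by
      rw [hz, (hP2.int_mul n) (w + (m : ℂ) * ((2 * π : ℝ) : ℂ)), (hP1.int_mul m) w]
    rw [this]
    exact hC w hwK
  -- Liouville
  have hconst : ∀ z : ℂ, F z = F 0 := fun z =>
    hFdiff.apply_eq_apply_of_bounded hbdd z 0
  intro t x
  have h1 := hconst (t + x * Complex.I)
  have h2 : F (↑t + ↑x * Complex.I) = f t x * Complex.exp (Complex.I * x) := by
    simp [hFdef, hGdef]
  have h3 : F 0 = f 0 0 := by simp [hFdef, hGdef]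
  rw [h2, h3] at h1
  rw [neg_mul, ← h1, mul_assoc, ← Complex.exp_add, add_neg_cancel, Complex.exp_zero, mul_one]

/-- for smooth doubly `2π`-periodic `u, v : T² → ℝ`, the system
`u_t - v_x - u = 0`, `u_x + v_t - v = 0` holds iff
`(u,v) = (A e^{ix} + Ā e^{-ix}, iA e^{ix} - iĀ e^{-ix})` for some `A ∈ ℂ`;
equivalently `f = u + iv` satisfies the system iff `f = 2B e^{-ix}` for some
`B ∈ ℂ`. -/
theorem stmt_12 (u v : ℝ → ℝ → ℝ)
    (hu : ContDiff ℝ (⊤ : ℕ∞) (fun p : ℝ × ℝ => u p.1 p.2))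
    (hv : ContDiff ℝ (⊤ : ℕ∞) (fun p : ℝ × ℝ => v p.1 p.2))
    (huper : ∀ t x, u (t + 2 * π) x = u t x ∧ u t (x + 2 * π) = u t x)
    (hvper : ∀ t x, v (t + 2 * π) x = v t x ∧ v t (x + 2 * π) = v t x) :
    ((∀ t x, pt u t x - px v t x - u t x = 0) ∧
        (∀ t x, px u t x + pt v t x - v t x = 0)) ↔
      (∃ A : ℂ, ∀ t x : ℝ,
        (u t x : ℂ) = A * Complex.exp (Complex.I * x) +
            (starRingEnd ℂ) A * Complex.exp (-Complex.I * x) ∧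
        (v t x : ℂ) = Complex.I * A * Complex.exp (Complex.I * x) -
            Complex.I * (starRingEnd ℂ) A * Complex.exp (-Complex.I * x)) ∧
      (∃ B : ℂ, ∀ t x : ℝ,
        (u t x : ℂ) + Complex.I * (v t x : ℂ) =
          2 * B * Complex.exp (-Complex.I * x)) := by
  have hud : Differentiable ℝ (fun p : ℝ × ℝ => u p.1 p.2) := hu.differentiable (by simp)
  have hvd : Differentiable ℝ (fun p : ℝ × ℝ => v p.1 p.2) := hv.differentiable (by simp)
  have husec1 : ∀ t x : ℝ, DifferentiableAt ℝ (fun s => u s x) t := fun t x =>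
    ((hud.comp (differentiable_id.prodMk (differentiable_const x))).differentiableAt)
  have husec2 : ∀ t x : ℝ, DifferentiableAt ℝ (fun y => u t y) x := fun t x =>
    ((hud.comp ((differentiable_const t).prodMk differentiable_id)).differentiableAt)
  have hvsec1 : ∀ t x : ℝ, DifferentiableAt ℝ (fun s => v s x) t := fun t x =>
    ((hvd.comp (differentiable_id.prodMk (differentiable_const x))).differentiableAt)
  have hvsec2 : ∀ t x : ℝ, DifferentiableAt ℝ (fun y => v t y) x := fun t x =>
    ((hvd.comp ((differentiable_const t).prodMk differentiable_id)).differentiableAt)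
  constructor
  · rintro ⟨h1, h2⟩
    set f : ℝ → ℝ → ℂ := fun t x => (u t x : ℂ) + Complex.I * (v t x : ℂ) with hfdef
    have hf : ContDiff ℝ (⊤ : ℕ∞) (fun p : ℝ × ℝ => f p.1 p.2) := by
      apply ContDiff.add
      · exact Complex.ofRealCLM.contDiff.comp hu
      · exact ContDiff.mul contDiff_const (Complex.ofRealCLM.contDiff.comp hv)
    have hp1 : ∀ t x, f (t + 2 * π) x = f t x := by
      intro t x; simp only [hfdef, (huper t x).1, (hvper t x).1]
    have hp2 : ∀ t x, f t (x + 2 * π) = f t x := by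
      intro t x; simp only [hfdef, (huper t x).2, (hvper t x).2]
    have hpde : ∀ t x, deriv (fun s => f s x) t + Complex.I * deriv (fun y => f t y) x
        = f t x := by
      intro t x
      have hdt : HasDerivAt (fun s => f s x) ((pt u t x : ℂ) + Complex.I * (pt v t x : ℂ)) t := by
        exact ((husec1 t x).hasDerivAt.ofReal_comp).add
          (((hvsec1 t x).hasDerivAt.ofReal_comp).const_mul Complex.I)
      have hdx : HasDerivAt (fun y => f t y) ((px u t x : ℂ) + Complex.I * (px v t x : ℂ)) x := by
        exact ((husec2 t x).hasDerivAt.ofReal_comp).add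
          (((hvsec2 t x).hasDerivAt.ofReal_comp).const_mul Complex.I)
      rw [hdt.deriv, hdx.deriv]
      have e1 : pt u t x = px v t x + u t x := by linarith [h1 t x]
      have e2 : pt v t x = v t x - px u t x := by linarith [h2 t x]
      rw [e1, e2]
      push_cast
      simp only [hfdef]
      linear_combination ((px v t x : ℝ) : ℂ) * Complex.I_sq
    have hkey := liouville_key f hf hp1 hp2 hpde
    set w : ℂ := f 0 0 with hwdef
    have hconjkey : ∀ t x : ℝ, (u t x : ℂ) - Complex.I * (v t x : ℂ)
        = (starRingEnd ℂ) w * Complex.exp (Complex.I * x) := by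
      intro t x
      have := congrArg (starRingEnd ℂ) (hkey t x)
      simp only [hfdef, map_add, map_mul, Complex.conj_ofReal, Complex.conj_I,
        ← Complex.exp_conj, map_neg] at this
      rw [show (u t x : ℂ) + -Complex.I * (v t x : ℂ) = (u t x : ℂ) - Complex.I * (v t x : ℂ) by
        ring] at this
      rw [this]
      ring_nf
    constructor
    · refine ⟨(starRingEnd ℂ) w / 2, fun t x => ⟨?_, ?_⟩⟩
      · have hA : (starRingEnd ℂ) ((starRingEnd ℂ) w / 2) = w / 2 := by
          rw [map_div₀, Complex.conj_conj, Complex.conj_ofNat]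
        rw [hA]
        have hk := hkey t x
        have hck := hconjkey t x
        simp only [hfdef] at hk
        linear_combination (hk + hck) / 2
      · have hA : (starRingEnd ℂ) ((starRingEnd ℂ) w / 2) = w / 2 := by
          rw [map_div₀, Complex.conj_conj, Complex.conj_ofNat]
        rw [hA]
        have hk := hkey t x
        have hck := hconjkey t x
        simp only [hfdef] at hk
        linear_combination (Complex.I * (hck - hk)) / 2 + (v t x : ℂ) * Complex.I_sq
    · refine ⟨w / 2, fun t x => ?_⟩
      have hk := hkey t x
      simp only [hfdef] at hk
      linear_combination hk
  · rintro ⟨⟨A, hA⟩, -⟩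
    set a : ℝ := A.re with hadef
    set b : ℝ := A.im with hbdef
    have hu' : ∀ t x : ℝ, u t x = 2 * a * Real.cos x - 2 * b * Real.sin x := by
      intro t x
      have h := (hA t x).1
      have hcast : ((u t x : ℝ) : ℂ) = ((2 * a * Real.cos x - 2 * b * Real.sin x : ℝ) : ℂ) := by
        rw [h]
        push_cast
        rw [mul_comm Complex.I (x : ℂ), Complex.exp_mul_I,
          show -Complex.I * (x : ℂ) = ((-x : ℝ) : ℂ) * Complex.I by push_cast; ring,
          Complex.exp_mul_I]
        rw [show (starRingEnd ℂ) A = (a : ℂ) - (b : ℂ) * Complex.I by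
            apply Complex.ext <;> simp [hadef, hbdef],
          show A = (a : ℂ) + (b : ℂ) * Complex.I from (Complex.re_add_im A).symm]
        push_cast
        rw [Complex.cos_neg, Complex.sin_neg]
        linear_combination (2 * (b : ℂ) * Complex.sin (x : ℂ)) * Complex.I_sq
      exact_mod_cast hcast
    have hv' : ∀ t x : ℝ, v t x = -(2 * a * Real.sin x) - 2 * b * Real.cos x := by
      intro t x
      have h := (hA t x).2
      have hcast : ((v t x : ℝ) : ℂ) = ((-(2 * a * Real.sin x) - 2 * b * Real.cos x : ℝ) : ℂ) := by
        rw [h]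
        push_cast
        rw [mul_comm Complex.I (x : ℂ), Complex.exp_mul_I,
          show -Complex.I * (x : ℂ) = ((-x : ℝ) : ℂ) * Complex.I by push_cast; ring,
          Complex.exp_mul_I]
        rw [show (starRingEnd ℂ) A = (a : ℂ) - (b : ℂ) * Complex.I by
            apply Complex.ext <;> simp [hadef, hbdef],
          show A = (a : ℂ) + (b : ℂ) * Complex.I from (Complex.re_add_im A).symm]
        push_cast
        rw [Complex.cos_neg, Complex.sin_neg]
        linear_combination (2 * ((b : ℂ) * Complex.cos (x : ℂ) + (a : ℂ) * Complex.sin (x : ℂ))) * Complex.I_sq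
      exact_mod_cast hcast
    have hptu : ∀ t x, pt u t x = 0 := by
      intro t x
      have : (fun s => u s x) = fun _ => 2 * a * Real.cos x - 2 * b * Real.sin x :=
        funext fun s => hu' s x
      unfold pt
      rw [this, deriv_const]
    have hptv : ∀ t x, pt v t x = 0 := by
      intro t x
      have : (fun s => v s x) = fun _ => -(2 * a * Real.sin x) - 2 * b * Real.cos x :=
        funext fun s => hv' s x
      unfold pt
      rw [this, deriv_const]
    have hpxu : ∀ t x, px u t x = -(2 * a * Real.sin x) - 2 * b * Real.cos x := by
      intro t x
      have hfun : (fun y => u t y) = fun y => 2 * a * Real.cos y - 2 * b * Real.sin y :=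
        funext fun y => hu' t y
      unfold px
      rw [hfun]
      have hd : HasDerivAt (fun y => 2 * a * Real.cos y - 2 * b * Real.sin y)
          (2 * a * (-Real.sin x) - 2 * b * Real.cos x) x :=
        (((Real.hasDerivAt_cos x).const_mul (2 * a))).sub
          (((Real.hasDerivAt_sin x).const_mul (2 * b)))
      rw [hd.deriv]; ring
    have hpxv : ∀ t x, px v t x = -(2 * a * Real.cos x) + 2 * b * Real.sin x := by
      intro t x
      have hfun : (fun y => v t y) = fun y => -(2 * a * Real.sin y) - 2 * b * Real.cos y :=
        funext fun y => hv' t y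
      unfold px
      rw [hfun]
      have hd : HasDerivAt (fun y => -(2 * a * Real.sin y) - 2 * b * Real.cos y)
          (-(2 * a * Real.cos x) - 2 * b * (-Real.sin x)) x :=
        (((Real.hasDerivAt_sin x).const_mul (2 * a)).neg).sub
          (((Real.hasDerivAt_cos x).const_mul (2 * b)))
      rw [hd.deriv]; ring
    constructor
    · intro t x
      rw [hptu, hpxv, hu' t x]; ring
    · intro t x
      rw [hpxu, hptv, hv' t x]; ring
end
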